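/- The bottom subspace ⊥ and the top subspace ⊤ of H are copyable along δ_e, and if subspaces K and L of H are copyable along δ_e then so is their meet K ⊓ L. Hence the copyable subspaces form a sub-meetsemilattice of the lattice of subspaces of H. -/

import Mathlib

/-!
A subspace `K` is copyable along `δ_e` exactly when every basis vector `e j` lies in `K` or in
`Kᗮ`. Indeed, evaluating the copying equation at `e j` shows that `v = P_K (e j)` satisfies
`δ_e v = v ⊗ v`; comparing coefficients in the basis `e i ⊗ e k` gives `cᵢ c_k = δᵢₖ cᵢ` for the
coordinates of `v`, so `v = 0` or `v = e i` for a single `i`, and then `i = j` because `P_K` is a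
symmetric idempotent. This criterion holds trivially for `⊥` and `⊤` and passes to `K ⊓ L`, since
`Kᗮ ≤ (K ⊓ L)ᗮ`.
-/

open scoped TensorProduct InnerProductSpace

/-- The orthogonal projection of `H` onto the subspace `K`, regarded as an endomorphism
`P_K : H →ₗ[ℂ] H`. -/
noncomputable def projL {H : Type*} [NormedAddCommGroup H] [InnerProductSpace ℂ H]
    [FiniteDimensional ℂ H] (K : Submodule ℂ H) : H →ₗ[ℂ] H :=
  K.subtype ∘ₗ (K.orthogonalProjectionOnto).toLinearMap

/-- The classical structure `δ_e : H →ₗ[ℂ] H ⊗[ℂ] H` associated with an orthonormal basis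
`e`, determined by `δ_e x = ∑ i, ⟪e i, x⟫_ℂ • (e i ⊗ₜ e i)`. -/
noncomputable def delta {ι H : Type*} [Fintype ι] [NormedAddCommGroup H]
    [InnerProductSpace ℂ H] (e : ι → H) : H →ₗ[ℂ] H ⊗[ℂ] H :=
  ∑ i, (innerSL ℂ (e i)).toLinearMap.smulRight (e i ⊗ₜ[ℂ] e i)

/-- A subspace `K` of `H` is copyable along `δ_e` if `δ_e ∘ₗ P_K = (P_K ⊗ P_K) ∘ₗ δ_e`. -/
def Copyable {ι H : Type*} [Fintype ι] [NormedAddCommGroup H] [InnerProductSpace ℂ H]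
    [FiniteDimensional ℂ H] (e : ι → H) (K : Submodule ℂ H) : Prop :=
  delta e ∘ₗ projL K = TensorProduct.map (projL K) (projL K) ∘ₗ delta e

open Submodule

lemma Orthonormal.mem_of_starProjection_eq {𝕜 E ι : Type*} [RCLike 𝕜] [NormedAddCommGroup E]
    [InnerProductSpace 𝕜 E] {e : ι → E} (he : Orthonormal 𝕜 e) (K : Submodule 𝕜 E)
    [K.HasOrthogonalProjection] {i j : ι} (hij : K.starProjection (e j) = e i) : e j ∈ K := by
  have hi : e i ∈ K := hij ▸ K.starProjection_apply_mem (e j)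
  have hinner : ⟪e j, e i⟫_𝕜 = 1 := calc
    ⟪e j, e i⟫_𝕜 = ⟪e j, K.starProjection (e i)⟫_𝕜 := by rw [starProjection_eq_self_iff.mpr hi]
    _ = ⟪e i, e i⟫_𝕜 := by rw [← inner_starProjection_left_eq_right, hij]
    _ = 1 := inner_self_eq_one_of_norm_eq_one (he.1 i)
  obtain rfl : j = i := by
    by_contra hne
    simp [he.inner_eq_zero hne] at hinner
  exact hi

lemma eq_zero_or_eq_single_of_mul_eq_ite {ι M₀ : Type*} [DecidableEq ι] [MonoidWithZero M₀]
    [IsCancelMulZero M₀]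
    {c : ι → M₀} (hc : ∀ i k, c i * c k = if i = k then c i else 0) :
    c = 0 ∨ ∃ i, c = Pi.single i 1 := by
  by_cases h0 : c = 0
  · exact Or.inl h0
  obtain ⟨i, hi⟩ : ∃ i, c i ≠ 0 := by simpa [funext_iff] using h0
  have hci : c i = 1 := mul_left_cancel₀ hi (by simpa using hc i i)
  refine Or.inr ⟨i, funext fun k => ?_⟩
  rcases eq_or_ne k i with rfl | hki
  · simp [hci]
  · simpa [hci, hki, Ne.symm hki] using hc i k

section Delta

variable {ι H : Type*} [Fintype ι] [NormedAddCommGroup H] [InnerProductSpace ℂ H]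

lemma delta_apply (e : ι → H) (x : H) :
    delta e x = ∑ i, ⟪e i, x⟫_ℂ • (e i ⊗ₜ[ℂ] e i) := by
  simp [delta]

lemma delta_apply_of_orthonormal {e : ι → H} (he : Orthonormal ℂ e) (j : ι) :
    delta e (e j) = e j ⊗ₜ[ℂ] e j := by
  classical
  simp [delta_apply, orthonormal_iff_ite.mp he]

lemma OrthonormalBasis.tensorProduct_repr_delta [DecidableEq ι] (e : OrthonormalBasis ι ℂ H)
    (v : H) (i k : ι) :
    (e.toBasis.tensorProduct e.toBasis).repr (delta e v) (i, k) =
      if i = k then e.repr v i else 0 := by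
  simp [delta_apply, Module.Basis.tensorProduct_repr_tmul_apply, e.repr_apply_apply, eq_comm]

lemma OrthonormalBasis.eq_zero_or_exists_eq_of_delta_eq_tmul (e : OrthonormalBasis ι ℂ H)
    {v : H} (hv : delta e v = v ⊗ₜ[ℂ] v) : v = 0 ∨ ∃ i, v = e i := by
  classical
  have hc : ∀ i k, e.repr v i * e.repr v k = if i = k then e.repr v i else 0 := fun i k => by
    rw [← e.tensorProduct_repr_delta, hv, Module.Basis.tensorProduct_repr_tmul_apply]
    simp [e.coe_toBasis_repr_apply, mul_comm]
  rcases eq_zero_or_eq_single_of_mul_eq_ite hc with h0 | ⟨i, hi⟩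
  · left
    rw [← e.sum_repr v]
    simp [h0]
  · right
    use i
    rw [← e.sum_repr v]
    simp [hi]

end Delta

section Copyable

variable {ι H : Type*} [Fintype ι] [NormedAddCommGroup H] [InnerProductSpace ℂ H]
  [FiniteDimensional ℂ H]

lemma projL_apply (K : Submodule ℂ H) (x : H) : projL K x = K.starProjection x := rfl

theorem copyable_iff_forall_mem_or_mem_orthogonal (e : OrthonormalBasis ι ℂ H)
    (K : Submodule ℂ H) : Copyable e K ↔ ∀ j, e j ∈ K ∨ e j ∈ Kᗮ := by
  have hδ := delta_apply_of_orthonormal e.orthonormal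
  constructor
  · intro hK j
    have hcopy : delta e (K.starProjection (e j)) =
        K.starProjection (e j) ⊗ₜ[ℂ] K.starProjection (e j) := by
      simpa [projL_apply, hδ] using LinearMap.congr_fun hK (e j)
    rcases e.eq_zero_or_exists_eq_of_delta_eq_tmul hcopy with h0 | ⟨i, hi⟩
    · exact Or.inr ((starProjection_apply_eq_zero_iff K).mp h0)
    · exact Or.inl (e.orthonormal.mem_of_starProjection_eq K hi)
  · intro h
    refine e.toBasis.ext fun j => ?_
    rcases h j with hj | hj
    · simp [projL_apply, starProjection_eq_self_iff.mpr hj, hδ]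
    · simp [projL_apply, (starProjection_apply_eq_zero_iff K).mpr hj, hδ]

end Copyable

/-- The trivial subspaces `⊥` and `⊤` are copyable along `δ_e`, and copyable subspaces are
closed under meet; hence copyable subspaces form a sub-meetsemilattice of the subspace
lattice of `H`. -/
theorem copyable_bot_top_and_inf
    {ι H : Type*} [Fintype ι] [NormedAddCommGroup H] [InnerProductSpace ℂ H]
    [FiniteDimensional ℂ H] (e : OrthonormalBasis ι ℂ H) :
    Copyable (⇑e) (⊥ : Submodule ℂ H) ∧ Copyable (⇑e) (⊤ : Submodule ℂ H) ∧
      ∀ K L : Submodule ℂ H, Copyable (⇑e) K → Copyable (⇑e) L → Copyable (⇑e) (K ⊓ L) := by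
  simp only [copyable_iff_forall_mem_or_mem_orthogonal]
  refine ⟨fun j => Or.inr (by simp), fun j => Or.inl trivial, fun K L hK hL j => ?_⟩
  rcases hK j with hjK | hjK
  · rcases hL j with hjL | hjL
    · exact Or.inl ⟨hjK, hjL⟩
    · exact Or.inr (orthogonal_le inf_le_right hjL)
  · exact Or.inr (orthogonal_le inf_le_left hjK)
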